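/- arXiv:0807.3498 — 2 statements merged into one kernel-verified Lean document; each statement's English description precedes it below -/
import Mathlib

section
/- Exact second-order growth formula for first derivatives: Suppose (R̂_k) has linear growth with growth generator R̂#. Then for j = 1, 2 and every k ≥ 0, ∂_j R_k(X₀) = ( (i·M_j/2)·R#(X₀) )·k² + ( ∂_j R#(X₀) − (i·M_j/2)·R#(X₀) )·k + ∂_j R₀(X₀), where i denotes the imaginary unit. -/
open Complex Real Filter

noncomputable section

/-- The trigonometric sum `A(X) = Σ_{V ∈ ℤ²} Â(V) · exp(i X·V)` of a finitely
supported function `Â : ℤ² → ℤ`. -/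
def trigSum (A : ℤ × ℤ → ℤ) (X : ℝ × ℝ) : ℂ :=
  ∑ᶠ V : ℤ × ℤ, (A V : ℂ) *
    Complex.exp (Complex.I * ((X.1 * (V.1 : ℝ) + X.2 * (V.2 : ℝ) : ℝ) : ℂ))

/-- First partial derivative `∂/∂x₁` of a complex-valued function on `ℝ²`. -/
def pd1 (f : ℝ × ℝ → ℂ) : ℝ × ℝ → ℂ := fun x => deriv (fun t => f (t, x.2)) x.1

/-- Second partial derivative `∂/∂x₂` of a complex-valued function on `ℝ²`. -/
def pd2 (f : ℝ × ℝ → ℂ) : ℝ × ℝ → ℂ := fun x => deriv (fun t => f (x.1, t)) x.2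

/-- The mixed partial derivative `D_I = ∂^{|I|}/∂x₁^{i₁}∂x₂^{i₂}` for the
multi-index `I = (i₁, i₂)` (complex-valued functions). -/
def DI (i₁ i₂ : ℕ) (f : ℝ × ℝ → ℂ) : ℝ × ℝ → ℂ := pd1^[i₁] (pd2^[i₂] f)

/-- First partial derivative `∂/∂x₁` of a real-valued function on `ℝ²`. -/
def pd1R (f : ℝ × ℝ → ℝ) : ℝ × ℝ → ℝ := fun x => deriv (fun t => f (t, x.2)) x.1

/-- Second partial derivative `∂/∂x₂` of a real-valued function on `ℝ²`. -/
def pd2R (f : ℝ × ℝ → ℝ) : ℝ × ℝ → ℝ := fun x => deriv (fun t => f (x.1, t)) x.2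

/-- The mixed partial derivative `D_I = ∂^{|I|}/∂x₁^{i₁}∂x₂^{i₂}` for the
multi-index `I = (i₁, i₂)` (real-valued functions). -/
def DIR (i₁ i₂ : ℕ) (f : ℝ × ℝ → ℝ) : ℝ × ℝ → ℝ := pd1R^[i₁] (pd2R^[i₂] f)

/-- `(R̂_k)` has linear growth with growth generator `R̂#`:
`R̂_{k+1}(V) = R̂_k(V) + R̂#(V − k·(M₁,M₂))`. -/
def LinearGrowth (M₁ M₂ : ℤ) (Rhat : ℕ → ℤ × ℤ → ℤ) (Rsharp : ℤ × ℤ → ℤ) : Prop :=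
  ∀ (k : ℕ) (V : ℤ × ℤ),
    Rhat (k + 1) V = Rhat k V + Rsharp (V.1 - (k : ℤ) * M₁, V.2 - (k : ℤ) * M₂)

/-! Since `R̂_{k+1} - R̂_k` is `R̂#` translated by `k·M`, one has
`R_{k+1} = R_k + e^{i k X·M} R#`. Differentiating at `X₀`, where `e^{i k X₀·M} = 1`, gives
`∂_j R_{k+1}(X₀) = ∂_j R_k(X₀) + i k M_j R#(X₀) + ∂_j R#(X₀)`, and summing these
increments over `k` produces the quadratic polynomial. We argue with the full derivative in an
arbitrary direction `v`, so that both partial derivatives are handled at once. -/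

def planeWave (V : ℤ × ℤ) (X : ℝ × ℝ) : ℂ :=
  Complex.exp (Complex.I * ((X.1 * (V.1 : ℝ) + X.2 * (V.2 : ℝ) : ℝ) : ℂ))

lemma planeWave_add (V W : ℤ × ℤ) (X : ℝ × ℝ) :
    planeWave (V + W) X = planeWave V X * planeWave W X := by
  simp only [planeWave, ← Complex.exp_add, Prod.fst_add, Prod.snd_add]
  push_cast
  ring_nf

lemma planeWave_eq_one {W : ℤ × ℤ} {X : ℝ × ℝ} {m : ℤ}
    (h : X.1 * (W.1 : ℝ) + X.2 * (W.2 : ℝ) = 2 * Real.pi * (m : ℝ)) : planeWave W X = 1 := by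
  rw [planeWave, h]
  convert Complex.exp_int_mul_two_pi_mul_I m using 2
  push_cast
  ring

lemma differentiable_planeWave (V : ℤ × ℤ) : Differentiable ℝ (planeWave V) := by
  unfold planeWave
  fun_prop

lemma hasDerivAt_planeWave_line (V : ℤ × ℤ) (X v : ℝ × ℝ) :
    HasDerivAt (fun t : ℝ => planeWave V (X + t • v))
      (Complex.I * ((v.1 * V.1 + v.2 * V.2 : ℝ) : ℂ) * planeWave V X) 0 := by
  have hphase : HasDerivAt (fun t : ℝ => (X + t • v).1 * V.1 + (X + t • v).2 * V.2)
      (v.1 * V.1 + v.2 * V.2) 0 := by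
    have hfun : (fun t : ℝ => (X + t • v).1 * V.1 + (X + t • v).2 * V.2) =
        fun t => (X.1 * V.1 + X.2 * V.2) + t * (v.1 * V.1 + v.2 * V.2) := by
      funext t
      simp only [Prod.fst_add, Prod.snd_add, Prod.smul_fst, Prod.smul_snd, smul_eq_mul]
      ring
    rw [hfun]
    simpa using ((hasDerivAt_id (0 : ℝ)).mul_const (v.1 * V.1 + v.2 * V.2)).const_add
      (X.1 * V.1 + X.2 * V.2)
  simpa [planeWave, mul_comm] using (hphase.ofReal_comp.const_mul Complex.I).cexp

lemma fderiv_planeWave (V : ℤ × ℤ) (X v : ℝ × ℝ) :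
    fderiv ℝ (planeWave V) X v = Complex.I * ((v.1 * V.1 + v.2 * V.2 : ℝ) : ℂ) * planeWave V X := by
  rw [← (differentiable_planeWave V X).lineDeriv_eq_fderiv]
  exact (hasDerivAt_planeWave_line V X v).deriv

section trigSum

variable {A B : ℤ × ℤ → ℤ}

lemma support_trigSum_summand_subset (A : ℤ × ℤ → ℤ) (X : ℝ × ℝ) :
    (Function.support fun V => (A V : ℂ) * planeWave V X) ⊆ Function.support A :=
  fun V hV hAV => hV (by simp [hAV])

lemma trigSum_eq_sum (hA : (Function.support A).Finite) (X : ℝ × ℝ) :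
    trigSum A X = ∑ V ∈ hA.toFinset, (A V : ℂ) * planeWave V X :=
  finsum_eq_sum_of_support_subset _ (by
    rw [Set.Finite.coe_toFinset]; exact support_trigSum_summand_subset A X)

lemma differentiable_trigSum (hA : (Function.support A).Finite) :
    Differentiable ℝ (trigSum A) := by
  rw [show trigSum A = _ from funext (trigSum_eq_sum hA)]
  exact Differentiable.fun_sum fun V _ => (differentiable_planeWave V).const_mul _

lemma trigSum_add (hA : (Function.support A).Finite) (hB : (Function.support B).Finite)
    (X : ℝ × ℝ) : trigSum (A + B) X = trigSum A X + trigSum B X := by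
  simp only [trigSum, Pi.add_apply, Int.cast_add, add_mul]
  exact finsum_add_distrib (hA.subset (support_trigSum_summand_subset A X))
    (hB.subset (support_trigSum_summand_subset B X))

lemma trigSum_comp_sub (A : ℤ × ℤ → ℤ) (W : ℤ × ℤ) (X : ℝ × ℝ) :
    trigSum (fun V => A (V - W)) X = planeWave W X * trigSum A X := by
  change ∑ᶠ V, (A (V - W) : ℂ) * planeWave V X = planeWave W X * ∑ᶠ V, (A V : ℂ) * planeWave V X
  rw [mul_finsum _ _, ← finsum_comp_equiv (Equiv.addRight W)]
  refine finsum_congr fun V => ?_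
  simp only [Equiv.coe_addRight, add_sub_cancel_right, planeWave_add]
  ring

lemma support_comp_sub_finite (hA : (Function.support A).Finite) (W : ℤ × ℤ) :
    (Function.support fun V => A (V - W)).Finite :=
  hA.preimage (sub_left_injective.injOn)

end trigSum

lemma pd1_eq_fderiv {f : ℝ × ℝ → ℂ} {x : ℝ × ℝ} (hf : DifferentiableAt ℝ f x) :
    pd1 f x = fderiv ℝ f x (1, 0) :=
  (hf.hasFDerivAt.comp_hasDerivAt x.1
    ((hasDerivAt_id x.1).prodMk (hasDerivAt_const x.1 x.2))).deriv

lemma pd2_eq_fderiv {f : ℝ × ℝ → ℂ} {x : ℝ × ℝ} (hf : DifferentiableAt ℝ f x) :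
    pd2 f x = fderiv ℝ f x (0, 1) :=
  (hf.hasFDerivAt.comp_hasDerivAt x.2
    ((hasDerivAt_const x.2 x.1).prodMk (hasDerivAt_id x.2))).deriv

lemma eq_quadratic_of_add_linear {K : Type*} [Field K] [CharZero K] {a : ℕ → K} {c d : K}
    (h : ∀ k : ℕ, a (k + 1) = a k + c * k + d) (k : ℕ) :
    a k = c / 2 * k ^ 2 + (d - c / 2) * k + a 0 := by
  induction k with
  | zero => simp
  | succ k ih =>
    rw [h, ih]
    push_cast
    ring

namespace LinearGrowth

variable {M₁ M₂ : ℤ} {Rhat : ℕ → ℤ × ℤ → ℤ} {Rsharp : ℤ × ℤ → ℤ}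

lemma trigSum_succ {k : ℕ} (hgrowth : LinearGrowth M₁ M₂ Rhat Rsharp)
    (hfin : (Function.support (Rhat k)).Finite) (hsfin : (Function.support Rsharp).Finite) :
    trigSum (Rhat (k + 1)) =
      trigSum (Rhat k) + planeWave ((k : ℤ) * M₁, (k : ℤ) * M₂) * trigSum Rsharp := by
  funext X
  rw [show Rhat (k + 1) = Rhat k + fun V => Rsharp (V - ((k : ℤ) * M₁, (k : ℤ) * M₂)) from
    funext (hgrowth k), trigSum_add hfin (support_comp_sub_finite hsfin _), trigSum_comp_sub]
  rfl

lemma fderiv_trigSum_succ {k : ℕ} (hgrowth : LinearGrowth M₁ M₂ Rhat Rsharp)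
    (hfin : (Function.support (Rhat k)).Finite) (hsfin : (Function.support Rsharp).Finite)
    {X : ℝ × ℝ} (hX : ∃ m : ℤ, X.1 * (M₁ : ℝ) + X.2 * (M₂ : ℝ) = 2 * Real.pi * (m : ℝ))
    (v : ℝ × ℝ) :
    fderiv ℝ (trigSum (Rhat (k + 1))) X v =
      fderiv ℝ (trigSum (Rhat k)) X v +
        Complex.I * ((v.1 * M₁ + v.2 * M₂ : ℝ) : ℂ) * trigSum Rsharp X * k +
        fderiv ℝ (trigSum Rsharp) X v := by
  obtain ⟨m, hm⟩ := hX
  have hwave : planeWave ((k : ℤ) * M₁, (k : ℤ) * M₂) X = 1 :=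
    planeWave_eq_one (m := k * m) (by push_cast; linear_combination (k : ℝ) * hm)
  have hR := differentiable_trigSum hfin X
  have hS := differentiable_trigSum hsfin X
  have hW := differentiable_planeWave ((k : ℤ) * M₁, (k : ℤ) * M₂) X
  rw [hgrowth.trigSum_succ hfin hsfin, fderiv_add hR (hW.mul hS), fderiv_mul hW hS]
  simp only [add_apply, smul_apply, fderiv_planeWave,
    hwave, smul_eq_mul]
  push_cast
  ring

lemma fderiv_trigSum (hgrowth : LinearGrowth M₁ M₂ Rhat Rsharp)
    (hfin : ∀ k, (Function.support (Rhat k)).Finite) (hsfin : (Function.support Rsharp).Finite)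
    {X : ℝ × ℝ} (hX : ∃ m : ℤ, X.1 * (M₁ : ℝ) + X.2 * (M₂ : ℝ) = 2 * Real.pi * (m : ℝ))
    (v : ℝ × ℝ) (k : ℕ) :
    fderiv ℝ (trigSum (Rhat k)) X v =
      (Complex.I * ((v.1 * M₁ + v.2 * M₂ : ℝ) : ℂ) / 2 * trigSum Rsharp X) * (k : ℂ) ^ 2 +
        (fderiv ℝ (trigSum Rsharp) X v -
          Complex.I * ((v.1 * M₁ + v.2 * M₂ : ℝ) : ℂ) / 2 * trigSum Rsharp X) * (k : ℂ) +
        fderiv ℝ (trigSum (Rhat 0)) X v := by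
  rw [eq_quadratic_of_add_linear (a := fun k => fderiv ℝ (trigSum (Rhat k)) X v)
    (fun k => hgrowth.fderiv_trigSum_succ (hfin k) hsfin hX v) k]
  ring

end LinearGrowth

/-- Exact second-order growth formula for the first partial derivatives:
`∂_j R_k(X₀) = (i·M_j/2·R#(X₀))·k² + (∂_j R#(X₀) − i·M_j/2·R#(X₀))·k + ∂_j R₀(X₀)`
for `j = 1, 2`. -/
theorem pderiv_trigSum_linearGrowth
    (M₁ M₂ : ℤ) (X₀ : ℝ × ℝ)
    (hX₀ : ∃ m : ℤ, X₀.1 * (M₁ : ℝ) + X₀.2 * (M₂ : ℝ) = 2 * Real.pi * (m : ℝ))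
    (Rhat : ℕ → ℤ × ℤ → ℤ) (Rsharp : ℤ × ℤ → ℤ)
    (hfin : ∀ k, (Function.support (Rhat k)).Finite)
    (hsfin : (Function.support Rsharp).Finite)
    (hgrowth : LinearGrowth M₁ M₂ Rhat Rsharp) :
    ∀ k : ℕ,
      (pd1 (trigSum (Rhat k)) X₀ =
          (Complex.I * (M₁ : ℂ) / 2 * trigSum Rsharp X₀) * (k : ℂ) ^ 2 +
            (pd1 (trigSum Rsharp) X₀ - Complex.I * (M₁ : ℂ) / 2 * trigSum Rsharp X₀) * (k : ℂ) +
            pd1 (trigSum (Rhat 0)) X₀) ∧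
      (pd2 (trigSum (Rhat k)) X₀ =
          (Complex.I * (M₂ : ℂ) / 2 * trigSum Rsharp X₀) * (k : ℂ) ^ 2 +
            (pd2 (trigSum Rsharp) X₀ - Complex.I * (M₂ : ℂ) / 2 * trigSum Rsharp X₀) * (k : ℂ) +
            pd2 (trigSum (Rhat 0)) X₀) := by
  intro k
  have hdiff : ∀ {A : ℤ × ℤ → ℤ}, (Function.support A).Finite →
      DifferentiableAt ℝ (trigSum A) X₀ := fun hA => differentiable_trigSum hA X₀
  simp only [pd1_eq_fderiv (hdiff (hfin _)), pd1_eq_fderiv (hdiff hsfin),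
    pd2_eq_fderiv (hdiff (hfin _)), pd2_eq_fderiv (hdiff hsfin),
    hgrowth.fderiv_trigSum hfin hsfin hX₀ _ k]
  constructor <;> simp

end
end

section
/- Suppose in addition that n = 2^m for some integer m ≥ 1. Then for every automorphism w in Γ, each i ∈ {1, −1}, and every integer k with 1−n ≤ k ≤ n−1, the coefficient of γ_k* in the basis expansion of w(φ_i*) is not divisible by 2n (in particular, it is nonzero). -/
noncomputable section

/-- Index type for the basis `{β₁*, β₋₁*} ∪ {γ_k* : 1−n ≤ k ≤ n−1}`:
`Sum.inl true ↔ β₁*`, `Sum.inl false ↔ β₋₁*`, `Sum.inr ⟨k,_⟩ ↔ γ_k*`. -/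
abbrev SIdx (n : ℤ) : Type := Bool ⊕ {k : ℤ // 1 - n ≤ k ∧ k ≤ n - 1}

/-- The free `ℤ`-module on the basis `{β₁*, β₋₁*} ∪ {γ_k* : 1−n ≤ k ≤ n−1}`. -/
abbrev SMod (n : ℤ) : Type := SIdx n →₀ ℤ

/-- `true ↦ 1`, `false ↦ −1`: the index `i ∈ {1,−1}` encoded by a Boolean. -/
def sgn (b : Bool) : ℤ := if b then 1 else -1

/-- The basis element `β_i*` (with `i = 1` for `b = true` and `i = −1` for `b = false`). -/
def betaStar (n : ℤ) (b : Bool) : SMod n := Finsupp.single (Sum.inl b) 1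

/-- The basis element `γ_k*` for `1−n ≤ k ≤ n−1`, and `0` otherwise (so in
particular `γ_n* = γ_{−n}* = 0`). -/
def gammaStar (n : ℤ) (k : ℤ) : SMod n :=
  if h : 1 - n ≤ k ∧ k ≤ n - 1 then Finsupp.single (Sum.inr ⟨k, h⟩) 1 else 0

/-- The `ℤ`-linear endomorphism `σ*`: `β_i* ↦ β_{−i}*`, `γ_k* ↦ γ_{−k}*`. -/
def sigmaStar (n : ℤ) : SMod n →ₗ[ℤ] SMod n :=
  Finsupp.linearCombination ℤ
    (Sum.elim (fun b => betaStar n (!b)) (fun k : {k : ℤ // 1 - n ≤ k ∧ k ≤ n - 1} =>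
      gammaStar n (-k.1)))

/-- The `ℤ`-linear endomorphism `τ_o*`: `β_i* ↦ β_i*`,
`γ_k* ↦ −γ_{k−1}* + γ_k* − γ_{k+1}*` for `k` odd and `γ_k* ↦ γ_k*` for `k` even. -/
def tauOStar (n : ℤ) : SMod n →ₗ[ℤ] SMod n :=
  Finsupp.linearCombination ℤ
    (Sum.elim (fun b => betaStar n b) (fun k : {k : ℤ // 1 - n ≤ k ∧ k ≤ n - 1} =>
      if Odd k.1 then -gammaStar n (k.1 - 1) + gammaStar n k.1 - gammaStar n (k.1 + 1)
      else gammaStar n k.1))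

/-- The `ℤ`-linear endomorphism `τ_e*`: `β_i* ↦ β_{−i}* + γ_i*`,
`γ_k* ↦ γ_k*` for `k` odd and `γ_k* ↦ −γ_{k−1}* + γ_k* − γ_{k+1}*` for `k` even. -/
def tauEStar (n : ℤ) : SMod n →ₗ[ℤ] SMod n :=
  Finsupp.linearCombination ℤ
    (Sum.elim (fun b => betaStar n (!b) + gammaStar n (sgn b))
      (fun k : {k : ℤ // 1 - n ≤ k ∧ k ≤ n - 1} =>
        if Odd k.1 then gammaStar n k.1
        else -gammaStar n (k.1 - 1) + gammaStar n k.1 - gammaStar n (k.1 + 1)))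

/-- `Γ`: the subgroup of the automorphism group of the module generated by the
automorphisms `σ*`, `τ_o*`, `τ_e*`. -/
def GammaGrp (n : ℤ) : Subgroup (SMod n ≃ₗ[ℤ] SMod n) :=
  Subgroup.closure {w : SMod n ≃ₗ[ℤ] SMod n |
    (w : SMod n →ₗ[ℤ] SMod n) = sigmaStar n ∨
    (w : SMod n →ₗ[ℤ] SMod n) = tauOStar n ∨
    (w : SMod n →ₗ[ℤ] SMod n) = tauEStar n}

/-- `φ₁* = 2n·β₁* + Σ_{k=1−n}^{0} (k+n)·γ_k* − Σ_{k=1}^{n−1} (n−k)·γ_k*` and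
`φ₋₁* = 2n·β₋₁* − Σ_{k=1−n}^{−1} (k+n)·γ_k* + n·γ₀* + Σ_{k=1}^{n−1} (n−k)·γ_k*`. -/
def phiStar (n : ℤ) (b : Bool) : SMod n :=
  if b then
    (2 * n) • betaStar n true
      + ∑ k ∈ Finset.Icc (1 - n) 0, (k + n) • gammaStar n k
      - ∑ k ∈ Finset.Icc 1 (n - 1), (n - k) • gammaStar n k
  else
    (2 * n) • betaStar n false
      - ∑ k ∈ Finset.Icc (1 - n) (-1), (k + n) • gammaStar n k
      + n • gammaStar n 0
      + ∑ k ∈ Finset.Icc 1 (n - 1), (n - k) • gammaStar n k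

/-!
Work modulo `2n`. Call `v` admissible if its `β*`-coefficients vanish mod `2n` and, for some
odd `t` and `u`, its `γ_k*`-coefficient is `≡ n + s k` (mod `2n`) for `|k| ≤ n`, where the slope
`s` is `t` at odd and `u` at even `k`; at `k = ±n` this is automatic because `s` is odd. The
coefficient formulas for the generators show that `σ*` maps the slopes `(t, u)` to `(-t, -u)`,
`τ_o*` to `(t, u - 2t)` and `τ_e*` to `(t - 2u, u)`, and in each case the converse holds as well, so
every generator, hence all of `Γ`, maps the admissible vectors onto themselves. `φ_{±1}*` is
admissible with slope `±1`. Finally, for `n = 2^m`, `s` odd and `|k| < n`, the `2`-adic valuation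
of `n + s k` is at most `m`, so `2n` does not divide it.
-/

theorem forall_mem_iff_of_iff_on_of_iff_off {α : Type*} {S : Set α} {p P P' : α → Prop}
    (hp : ∀ k ∈ S, p k → (P' k ↔ P k))
    (hnp : (∀ k ∈ S, p k → P k) → ∀ k ∈ S, ¬p k → (P' k ↔ P k)) :
    (∀ k ∈ S, P' k) ↔ ∀ k ∈ S, P k := by
  have key (H : ∀ k ∈ S, p k → P k) : (∀ k ∈ S, P' k) ↔ ∀ k ∈ S, P k :=
    forall₂_congr fun k hk => (em (p k)).elim (hp k hk) (hnp H k hk)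
  exact ⟨fun h => (key fun k hk hpk => (hp k hk hpk).1 (h k hk)).1 h,
    fun h => (key fun k hk _ => h k hk).2 h⟩

theorem forall_bool_not_iff {P : Bool → Prop} : (∀ b, P !b) ↔ ∀ b, P b :=
  Bool.involutive_not.surjective.forall.symm

theorem not_two_pow_succ_dvd_two_pow_add_odd_mul {s : ℤ} (hs : Odd s) :
    ∀ {m : ℕ} {k : ℤ}, |k| < 2 ^ m → ¬2 ^ (m + 1) ∣ 2 ^ m + s * k
  | 0, k, hk => by
    obtain rfl : k = 0 := Int.abs_lt_one_iff.1 (by simpa using hk)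
    norm_num
  | m + 1, k, hk => by
    obtain ⟨k, rfl⟩ | hk_odd := Int.even_or_odd k
    · rw [show (2 : ℤ) ^ (m + 1) + s * (k + k) = 2 * (2 ^ m + s * k) by ring,
        pow_succ' 2 (m + 1), mul_dvd_mul_iff_left two_ne_zero]
      refine not_two_pow_succ_dvd_two_pow_add_odd_mul hs ?_
      rw [abs_lt] at hk ⊢
      constructor <;> linarith [pow_succ' (2 : ℤ) m]
    · intro h
      have h2 : (2 : ℤ) ∣ 2 ^ (m + 1) + s * k := (dvd_pow_self 2 (by omega)).trans h
      rw [dvd_add_right (dvd_pow_self 2 (by omega))] at h2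
      exact Int.not_even_iff_odd.2 (hs.mul hk_odd) (even_iff_two_dvd.2 h2)

/-- Vanishes identically for `k` outside `[1 - n, n - 1]`, in accordance with `γ_{±n}* = 0`. -/
def gammaCoeff (n k : ℤ) : SMod n →ₗ[ℤ] ℤ :=
  if h : 1 - n ≤ k ∧ k ≤ n - 1 then Finsupp.lapply (Sum.inr ⟨k, h⟩) else 0

section Coefficients

variable {n k : ℤ}

theorem gammaCoeff_apply (hk : 1 - n ≤ k ∧ k ≤ n - 1) (v : SMod n) :
    gammaCoeff n k v = v (Sum.inr ⟨k, hk⟩) := by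
  simp [gammaCoeff, hk]

theorem gammaCoeff_of_not_mem (hk : ¬(1 - n ≤ k ∧ k ≤ n - 1)) : gammaCoeff n k = 0 := by
  rw [gammaCoeff, dif_neg hk]

theorem gammaCoeff_gammaStar (j : ℤ) :
    gammaCoeff n k (gammaStar n j) = if j = k ∧ 1 - n ≤ k ∧ k ≤ n - 1 then 1 else 0 := by
  by_cases hk : 1 - n ≤ k ∧ k ≤ n - 1
  · rw [gammaCoeff_apply hk, gammaStar]
    split_ifs <;> simp_all
  · rw [gammaCoeff_of_not_mem hk, if_neg (by tauto), LinearMap.zero_apply]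

theorem gammaCoeff_betaStar (b : Bool) : gammaCoeff n k (betaStar n b) = 0 := by
  by_cases hk : 1 - n ≤ k ∧ k ≤ n - 1
  · simp [gammaCoeff_apply hk, betaStar]
  · simp [gammaCoeff_of_not_mem hk]

theorem gammaStar_apply_inl (j : ℤ) (b : Bool) : gammaStar n j (Sum.inl b) = 0 := by
  unfold gammaStar; split_ifs <;> simp

theorem betaStar_apply_inl (b b' : Bool) :
    betaStar n b (Sum.inl b') = if b = b' then 1 else 0 := by
  simp [betaStar, Finsupp.single_apply]

theorem single_inl_eq_betaStar (b : Bool) : Finsupp.single (Sum.inl b) 1 = betaStar n b := rfl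

theorem single_inr_eq_gammaStar (j : {k : ℤ // 1 - n ≤ k ∧ k ≤ n - 1}) :
    Finsupp.single (Sum.inr j) 1 = gammaStar n j.1 := by
  simp [gammaStar, j.2]

theorem sigmaStar_apply_inl (v : SMod n) (b : Bool) :
    sigmaStar n v (Sum.inl b) = v (Sum.inl !b) := by
  suffices Finsupp.lapply (Sum.inl b) ∘ₗ sigmaStar n = Finsupp.lapply (Sum.inl !b) from
    LinearMap.congr_fun this v
  ext (b' | j) <;>
    simp only [LinearMap.comp_apply, Finsupp.lsingle_apply, sigmaStar,
      Finsupp.linearCombination_single, one_smul, Sum.elim_inl, Sum.elim_inr]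
  · simp [betaStar_apply_inl, Finsupp.single_apply]
  · simp [gammaStar_apply_inl]

theorem tauOStar_apply_inl (v : SMod n) (b : Bool) :
    tauOStar n v (Sum.inl b) = v (Sum.inl b) := by
  suffices Finsupp.lapply (Sum.inl b) ∘ₗ tauOStar n = Finsupp.lapply (Sum.inl b) from
    LinearMap.congr_fun this v
  ext (b' | j) <;>
    simp only [LinearMap.comp_apply, Finsupp.lsingle_apply, tauOStar,
      Finsupp.linearCombination_single, one_smul, Sum.elim_inl, Sum.elim_inr]
  · simp [betaStar_apply_inl, Finsupp.single_apply]
  · split_ifs <;> simp [gammaStar_apply_inl]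

theorem tauEStar_apply_inl (v : SMod n) (b : Bool) :
    tauEStar n v (Sum.inl b) = v (Sum.inl !b) := by
  suffices Finsupp.lapply (Sum.inl b) ∘ₗ tauEStar n = Finsupp.lapply (Sum.inl !b) from
    LinearMap.congr_fun this v
  ext (b' | j) <;>
    simp only [LinearMap.comp_apply, Finsupp.lsingle_apply, tauEStar,
      Finsupp.linearCombination_single, one_smul, Sum.elim_inl, Sum.elim_inr]
  · simp [betaStar_apply_inl, gammaStar_apply_inl, Finsupp.single_apply]
  · split_ifs <;> simp [gammaStar_apply_inl]

theorem gammaCoeff_sigmaStar (v : SMod n) :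
    gammaCoeff n k (sigmaStar n v) = gammaCoeff n (-k) v := by
  suffices gammaCoeff n k ∘ₗ sigmaStar n = gammaCoeff n (-k) from LinearMap.congr_fun this v
  ext (b | j) <;>
    simp only [LinearMap.comp_apply, Finsupp.lsingle_apply, sigmaStar,
      Finsupp.linearCombination_single, one_smul, Sum.elim_inl, Sum.elim_inr]
  · simp [single_inl_eq_betaStar, gammaCoeff_betaStar]
  · simp only [single_inr_eq_gammaStar, gammaCoeff_gammaStar]
    grind

theorem gammaCoeff_tauOStar_of_odd (hk : Odd k) (v : SMod n) :
    gammaCoeff n k (tauOStar n v) = gammaCoeff n k v := by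
  suffices gammaCoeff n k ∘ₗ tauOStar n = gammaCoeff n k from LinearMap.congr_fun this v
  ext (b | j) <;>
    simp only [LinearMap.comp_apply, Finsupp.lsingle_apply, tauOStar,
      Finsupp.linearCombination_single, one_smul, Sum.elim_inl, Sum.elim_inr]
  · simp [single_inl_eq_betaStar, gammaCoeff_betaStar]
  · simp only [apply_ite (gammaCoeff n _), map_add, map_sub, map_neg,
      single_inr_eq_gammaStar, gammaCoeff_gammaStar]
    grind

theorem gammaCoeff_tauOStar_of_even (hk : 1 - n ≤ k ∧ k ≤ n - 1) (he : ¬Odd k) (v : SMod n) :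
    gammaCoeff n k (tauOStar n v) =
      gammaCoeff n k v - gammaCoeff n (k - 1) v - gammaCoeff n (k + 1) v := by
  suffices gammaCoeff n k ∘ₗ tauOStar n =
      gammaCoeff n k - gammaCoeff n (k - 1) - gammaCoeff n (k + 1) from LinearMap.congr_fun this v
  ext (b | j) <;>
    simp only [LinearMap.comp_apply, Finsupp.lsingle_apply, tauOStar,
      Finsupp.linearCombination_single, one_smul, Sum.elim_inl, Sum.elim_inr]
  · simp [single_inl_eq_betaStar, gammaCoeff_betaStar]
  · simp only [apply_ite (gammaCoeff n _), map_add, map_sub, map_neg, LinearMap.sub_apply,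
      single_inr_eq_gammaStar, gammaCoeff_gammaStar]
    grind

theorem gammaCoeff_tauEStar_of_even (he : ¬Odd k) (v : SMod n) :
    gammaCoeff n k (tauEStar n v) = gammaCoeff n k v := by
  suffices gammaCoeff n k ∘ₗ tauEStar n = gammaCoeff n k from LinearMap.congr_fun this v
  ext (b | j) <;>
    simp only [LinearMap.comp_apply, Finsupp.lsingle_apply, tauEStar,
      Finsupp.linearCombination_single, one_smul, Sum.elim_inl, Sum.elim_inr]
  · simp only [map_add, single_inl_eq_betaStar, gammaCoeff_betaStar, gammaCoeff_gammaStar, sgn]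
    grind
  · simp only [apply_ite (gammaCoeff n _), map_add, map_sub, map_neg,
      single_inr_eq_gammaStar, gammaCoeff_gammaStar]
    grind

theorem gammaCoeff_tauEStar_of_odd (hk : 1 - n ≤ k ∧ k ≤ n - 1) (ho : Odd k) (v : SMod n) :
    gammaCoeff n k (tauEStar n v) =
      gammaCoeff n k v - gammaCoeff n (k - 1) v - gammaCoeff n (k + 1) v
        + (if k = 1 then v (Sum.inl true) else 0) + (if k = -1 then v (Sum.inl false) else 0) := by
  have key : gammaCoeff n k ∘ₗ tauEStar n =
      gammaCoeff n k - gammaCoeff n (k - 1) - gammaCoeff n (k + 1)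
        + (if k = 1 then Finsupp.lapply (Sum.inl true) else 0)
        + (if k = -1 then Finsupp.lapply (Sum.inl false) else 0) := by
    ext (b | j) <;>
      simp only [LinearMap.comp_apply, Finsupp.lsingle_apply, tauEStar,
        Finsupp.linearCombination_single, one_smul, Sum.elim_inl, Sum.elim_inr]
    · split_ifs <;>
        simp only [map_add, LinearMap.add_apply, LinearMap.sub_apply, LinearMap.zero_apply,
          Finsupp.lapply_apply, single_inl_eq_betaStar, betaStar_apply_inl, gammaCoeff_betaStar,
          gammaCoeff_gammaStar, sgn] <;>
        grind
    · split_ifs <;>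
        simp only [map_add, map_sub, map_neg, LinearMap.add_apply, LinearMap.sub_apply,
          LinearMap.zero_apply, Finsupp.lapply_apply, single_inr_eq_gammaStar, gammaCoeff_gammaStar,
          gammaStar_apply_inl] <;>
        grind
  have := LinearMap.congr_fun key v
  simp only [LinearMap.comp_apply, LinearMap.add_apply, LinearMap.sub_apply] at this
  split_ifs at this ⊢ <;> simpa using this

end Coefficients

def defect (n t u : ℤ) (v : SMod n) (k : ℤ) : ℤ :=
  gammaCoeff n k v - n - (if Odd k then t else u) * k

def IsCongrPattern (n t u : ℤ) (v : SMod n) : Prop :=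
  (∀ b, 2 * n ∣ v (Sum.inl b)) ∧ ∀ k ∈ Set.Icc (-n) n, 2 * n ∣ defect n t u v k

section Pattern

variable {n t u k : ℤ} {v : SMod n}

theorem two_mul_dvd_defect_of_eq_or_eq_neg (ht : Odd t) (hu : Odd u) (hk : k = n ∨ k = -n) :
    2 * n ∣ defect n t u v k := by
  obtain ⟨s, hs⟩ : Odd (if Odd k then t else u) := by split_ifs <;> assumption
  rw [defect, gammaCoeff_of_not_mem (by omega), LinearMap.zero_apply, hs]
  rcases hk with rfl | rfl
  · exact ⟨-(s + 1), by ring⟩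
  · exact ⟨s, by ring⟩

theorem isCongrPattern_sigmaStar_iff :
    IsCongrPattern n (-t) (-u) (sigmaStar n v) ↔ IsCongrPattern n t u v := by
  have hdefect (k : ℤ) : defect n (-t) (-u) (sigmaStar n v) k = defect n t u v (-k) := by
    simp only [defect, gammaCoeff_sigmaStar, odd_neg]
    split_ifs <;> ring
  simp only [IsCongrPattern, sigmaStar_apply_inl, hdefect]
  refine and_congr (forall_bool_not_iff (P := fun b => 2 * n ∣ v (Sum.inl b)))
    ⟨fun h k hk => ?_, fun h k hk => h (-k) ⟨by linarith [hk.2], by linarith [hk.1]⟩⟩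
  simpa using h (-k) ⟨by linarith [hk.2], by linarith [hk.1]⟩

theorem isCongrPattern_tauOStar_iff (ht : Odd t) (hu : Odd u) :
    IsCongrPattern n t (u - 2 * t) (tauOStar n v) ↔ IsCongrPattern n t u v := by
  have hu' : Odd (u - 2 * t) := hu.sub_even (even_two_mul t)
  simp only [IsCongrPattern, tauOStar_apply_inl]
  refine and_congr_right fun _ => forall_mem_iff_of_iff_on_of_iff_off (p := Odd)
    (fun k _ hk => ?_) fun hodd k hk he => ?_
  · rw [defect, defect, gammaCoeff_tauOStar_of_odd hk, if_pos hk, if_pos hk]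
  by_cases hr : 1 - n ≤ k ∧ k ≤ n - 1
  · have hpred : Odd (k - 1) := by grind
    have hsucc : Odd (k + 1) := by grind
    have hdefect : defect n t (u - 2 * t) (tauOStar n v) k =
        defect n t u v k - defect n t u v (k - 1) - defect n t u v (k + 1) - 2 * n * 1 := by
      simp only [defect, gammaCoeff_tauOStar_of_even hr he, if_neg he, if_pos hpred, if_pos hsucc]
      ring
    rw [hdefect, dvd_sub_left (dvd_mul_right _ _), dvd_sub_left (hodd _ ⟨by omega, by omega⟩ hsucc),
      dvd_sub_left (hodd _ ⟨by omega, by omega⟩ hpred)]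
  · exact iff_of_true (two_mul_dvd_defect_of_eq_or_eq_neg ht hu' (by grind))
      (two_mul_dvd_defect_of_eq_or_eq_neg ht hu (by grind))

theorem isCongrPattern_tauEStar_iff (ht : Odd t) (hu : Odd u) :
    IsCongrPattern n (t - 2 * u) u (tauEStar n v) ↔ IsCongrPattern n t u v := by
  have ht' : Odd (t - 2 * u) := ht.sub_even (even_two_mul u)
  simp only [IsCongrPattern, tauEStar_apply_inl]
  rw [forall_bool_not_iff (P := fun b => 2 * n ∣ v (Sum.inl b))]
  refine and_congr_right fun hβ => forall_mem_iff_of_iff_on_of_iff_off (p := fun k => ¬Odd k)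
    (fun k _ hk => ?_) fun heven k hk ho => ?_
  · rw [defect, defect, gammaCoeff_tauEStar_of_even hk, if_neg hk, if_neg hk]
  rw [not_not] at ho
  by_cases hr : 1 - n ≤ k ∧ k ≤ n - 1
  · have hpred : ¬Odd (k - 1) := by grind
    have hsucc : ¬Odd (k + 1) := by grind
    have hdefect : defect n (t - 2 * u) u (tauEStar n v) k =
        defect n t u v k - defect n t u v (k - 1) - defect n t u v (k + 1) - 2 * n * 1
          + (if k = 1 then v (Sum.inl true) else 0)
          + (if k = -1 then v (Sum.inl false) else 0) := by
      simp only [defect, gammaCoeff_tauEStar_of_odd hr ho, if_pos ho, if_neg hpred, if_neg hsucc]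
      ring
    have hβ₁ : 2 * n ∣ if k = 1 then v (Sum.inl true) else 0 := by
      split_ifs; exacts [hβ true, dvd_zero _]
    have hβ₂ : 2 * n ∣ if k = -1 then v (Sum.inl false) else 0 := by
      split_ifs; exacts [hβ false, dvd_zero _]
    rw [hdefect, dvd_add_left hβ₂, dvd_add_left hβ₁, dvd_sub_left (dvd_mul_right _ _),
      dvd_sub_left (heven _ ⟨by omega, by omega⟩ hsucc),
      dvd_sub_left (heven _ ⟨by omega, by omega⟩ hpred)]
  · exact iff_of_true (two_mul_dvd_defect_of_eq_or_eq_neg ht' hu (by grind))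
      (two_mul_dvd_defect_of_eq_or_eq_neg ht hu (by grind))

end Pattern

def Admissible (n : ℤ) (v : SMod n) : Prop :=
  ∃ t u, Odd t ∧ Odd u ∧ IsCongrPattern n t u v

section Admissible

variable {n : ℤ} {v : SMod n}

theorem admissible_sigmaStar_iff : Admissible n (sigmaStar n v) ↔ Admissible n v := by
  constructor
  · rintro ⟨t, u, ht, hu, h⟩
    rw [← neg_neg t, ← neg_neg u] at h
    exact ⟨-t, -u, ht.neg, hu.neg, isCongrPattern_sigmaStar_iff.1 h⟩
  · rintro ⟨t, u, ht, hu, h⟩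
    exact ⟨-t, -u, ht.neg, hu.neg, isCongrPattern_sigmaStar_iff.2 h⟩

theorem admissible_tauOStar_iff : Admissible n (tauOStar n v) ↔ Admissible n v := by
  constructor
  · rintro ⟨t, u, ht, hu, h⟩
    have hu' : Odd (u + 2 * t) := hu.add_even (even_two_mul t)
    rw [← add_sub_cancel_right u (2 * t)] at h
    exact ⟨t, u + 2 * t, ht, hu', (isCongrPattern_tauOStar_iff ht hu').1 h⟩
  · rintro ⟨t, u, ht, hu, h⟩
    exact ⟨t, u - 2 * t, ht, hu.sub_even (even_two_mul t), (isCongrPattern_tauOStar_iff ht hu).2 h⟩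

theorem admissible_tauEStar_iff : Admissible n (tauEStar n v) ↔ Admissible n v := by
  constructor
  · rintro ⟨t, u, ht, hu, h⟩
    have ht' : Odd (t + 2 * u) := ht.add_even (even_two_mul u)
    rw [← add_sub_cancel_right t (2 * u)] at h
    exact ⟨t + 2 * u, u, ht', hu, (isCongrPattern_tauEStar_iff ht' hu).1 h⟩
  · rintro ⟨t, u, ht, hu, h⟩
    exact ⟨t - 2 * u, u, ht.sub_even (even_two_mul u), hu, (isCongrPattern_tauEStar_iff ht hu).2 h⟩

end Admissible

open Pointwise in
theorem gammaGrp_le_stabilizer_admissible (n : ℤ) :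
    GammaGrp n ≤ MulAction.stabilizer (SMod n ≃ₗ[ℤ] SMod n) {v | Admissible n v} := by
  refine (Subgroup.closure_le _).2 fun w hw => MulAction.mem_stabilizer_set.2 fun v => ?_
  rw [LinearEquiv.smul_def, Set.mem_ofPred_eq, Set.mem_ofPred_eq, ← LinearEquiv.coe_coe]
  rcases hw with h | h | h <;> rw [h]
  exacts [admissible_sigmaStar_iff, admissible_tauOStar_iff, admissible_tauEStar_iff]

theorem odd_sgn (b : Bool) : Odd (sgn b) := by
  cases b <;> simp [sgn]

theorem isCongrPattern_phiStar (n : ℤ) (b : Bool) :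
    IsCongrPattern n (sgn b) (sgn b) (phiStar n b) := by
  refine ⟨fun b' => ?_, fun k hk => ?_⟩
  · cases b <;> cases b' <;>
      simp [phiStar, betaStar_apply_inl, gammaStar_apply_inl]
  by_cases hr : 1 - n ≤ k ∧ k ≤ n - 1
  -- every defect of `φ_{±1}*` is `0` or `-2n`
  · cases b <;>
      simp only [defect, phiStar, sgn, Bool.false_eq_true, ↓reduceIte, map_add, map_sub, map_smul,
        map_sum, gammaCoeff_betaStar, gammaCoeff_gammaStar, hr, and_self, and_true, true_and,
        Int.zsmul_eq_mul, mul_zero, mul_ite, mul_one, Finset.sum_ite_eq', Finset.mem_Icc] <;>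
      split_ifs <;> first | exact ⟨0, by omega⟩ | exact ⟨-1, by omega⟩
  · exact two_mul_dvd_defect_of_eq_or_eq_neg (odd_sgn b) (odd_sgn b) (by grind)

theorem Admissible.apply_of_mem_gammaGrp {n : ℤ} {v : SMod n} (hv : Admissible n v)
    {w : SMod n ≃ₗ[ℤ] SMod n} (hw : w ∈ GammaGrp n) : Admissible n (w v) :=
  (MulAction.mem_stabilizer_set.1 (gammaGrp_le_stabilizer_admissible n hw) v).2 hv

theorem admissible_phiStar (n : ℤ) (b : Bool) : Admissible n (phiStar n b) :=
  ⟨_, _, odd_sgn b, odd_sgn b, isCongrPattern_phiStar n b⟩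

theorem Admissible.not_two_mul_dvd_apply_inr {m : ℕ} {v : SMod (2 ^ m)}
    (hv : Admissible (2 ^ m) v) {k : ℤ} (hk : 1 - 2 ^ m ≤ k ∧ k ≤ 2 ^ m - 1) :
    ¬2 * 2 ^ m ∣ v (Sum.inr ⟨k, hk⟩) := by
  intro hdvd
  obtain ⟨t, u, ht, hu, -, hγ⟩ := hv
  have hdefect := hγ k ⟨by omega, by omega⟩
  rw [defect, gammaCoeff_apply hk, sub_sub, dvd_sub_right hdvd, ← pow_succ'] at hdefect
  have hs : Odd (if Odd k then t else u) := by split_ifs <;> assumption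
  exact not_two_pow_succ_dvd_two_pow_add_odd_mul hs (abs_lt.2 ⟨by omega, by omega⟩) hdefect

theorem instability_power_of_two_general (n : ℤ)
    (hpow : ∃ m : ℕ, 1 ≤ m ∧ n = 2 ^ m)
    (w : SMod n ≃ₗ[ℤ] SMod n) (hw : w ∈ GammaGrp n) (b : Bool) :
    ∀ (k : ℤ) (hk : 1 - n ≤ k ∧ k ≤ n - 1),
      ¬ (2 * n ∣ (w (phiStar n b)) (Sum.inr ⟨k, hk⟩)) := by
  intro k hk
  obtain ⟨m, -, rfl⟩ := hpow
  exact ((admissible_phiStar _ b).apply_of_mem_gammaGrp hw).not_two_mul_dvd_apply_inr hk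

/-- If moreover `n = 2^m` with `m ≥ 1`, then for every automorphism `w ∈ Γ`, each
`i ∈ {1,−1}`, and every `k` with `1−n ≤ k ≤ n−1`, the coefficient of `γ_k*` in the
basis expansion of `w(φ_i*)` is not divisible by `2n` (in particular it is nonzero). -/
theorem instability_power_of_two (n : ℤ) (hn : 2 ≤ n)
    (hpow : ∃ m : ℕ, 1 ≤ m ∧ n = 2 ^ m)
    (w : SMod n ≃ₗ[ℤ] SMod n) (hw : w ∈ GammaGrp n) (b : Bool) :
    ∀ (k : ℤ) (hk : 1 - n ≤ k ∧ k ≤ n - 1),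
      ¬ (2 * n ∣ (w (phiStar n b)) (Sum.inr ⟨k, hk⟩)) :=
  instability_power_of_two_general n hpow w hw b

end
end
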